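/- arXiv:2411.01271 — 2 statements merged into one kernel-verified Lean document; each statement's English description precedes it below -/
import Mathlib

section
/- Necessity of NIAC: for a rationally inattentive Bayesian utility maximizer that in each environment m chooses the attention strategy B(m) maximizing expected utility J(B, r_m) minus information cost Z(B), the revealed attention strategies B'_m (given by B'_m(u|x) = P_m(u|x)) satisfy, for any two environments l ≠ m, J(B'_m, r_m) − c_m ≥ J(B'_l, r_m) − c_l, where c_m = Z(B(m)) and J(B', r) ≤ J(B, r) whenever B Blackwell dominates B' and J(·, r) is convex. -/
open Finset

/-- The maximal expected utility functional of an attention strategy,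
`J(B, r) = ∑_y max_u ∑_x r(x,u) B(y|x) π₀(x)`. -/
noncomputable def maxExpUtility {X Y U : Type*} [Fintype X] [Fintype Y] [Fintype U]
    [Nonempty U] (π0 : X → ℝ) (r : X → U → ℝ) (B : X → Y → ℝ) : ℝ :=
  ∑ y, Finset.univ.sup' Finset.univ_nonempty
    (fun u : U => ∑ x, r x u * B x y * π0 x)

/-- A row-stochastic matrix (attention strategy). -/
def IsStochastic {X Y : Type*} [Fintype Y] (B : X → Y → ℝ) : Prop :=
  (∀ x y, 0 ≤ B x y) ∧ ∀ x, ∑ y, B x y = 1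

lemma garbling_le {X Y U : Type*} [Fintype X] [Fintype Y] [Fintype U]
    [Nonempty U] (π0 : X → ℝ) (r : X → U → ℝ) (B : X → Y → ℝ)
    (B' : X → U → ℝ) (Q : Y → U → ℝ) (hQ0 : ∀ y u, 0 ≤ Q y u)
    (hQ1 : ∀ y, ∑ u, Q y u = 1)
    (hB' : ∀ x u, B' x u = ∑ y, Q y u * B x y) :
    maxExpUtility π0 r B' ≤ maxExpUtility π0 r B := by
  unfold maxExpUtility
  have key : ∀ u : U,
      (Finset.univ.sup' Finset.univ_nonempty
        (fun u' : U => ∑ x, r x u' * B' x u * π0 x))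
      ≤ ∑ y, Q y u * (Finset.univ.sup' Finset.univ_nonempty
        (fun u' : U => ∑ x, r x u' * B x y * π0 x)) := by
    intro u
    apply Finset.sup'_le
    intro u' _
    have : ∑ x, r x u' * B' x u * π0 x
        = ∑ y, Q y u * ∑ x, r x u' * B x y * π0 x := by
      simp only [hB', Finset.mul_sum, Finset.sum_mul]
      rw [Finset.sum_comm]
      congr 1; ext y; congr 1; ext x; ring
    rw [this]
    apply Finset.sum_le_sum
    intro y _
    exact mul_le_mul_of_nonneg_left
      (Finset.le_sup' (fun u' : U => ∑ x, r x u' * B x y * π0 x) (Finset.mem_univ u')) (hQ0 y u)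
  calc (∑ u, Finset.univ.sup' Finset.univ_nonempty
        (fun u' : U => ∑ x, r x u' * B' x u * π0 x))
      ≤ ∑ u, ∑ y, Q y u * (Finset.univ.sup' Finset.univ_nonempty
        (fun u' : U => ∑ x, r x u' * B x y * π0 x)) :=
        Finset.sum_le_sum fun u _ => key u
    _ = ∑ y, Finset.univ.sup' Finset.univ_nonempty
        (fun u' : U => ∑ x, r x u' * B x y * π0 x) := by
        rw [Finset.sum_comm]
        refine Finset.sum_congr rfl fun y _ => ?_
        rw [← Finset.sum_mul, hQ1, one_mul]

/-- **Necessity of NIAC.**  For a rationally inattentive Bayesian utility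
maximizer that in each environment `m` chooses the attention strategy
`Batt m` maximizing expected utility minus information cost `Z`, the revealed
attention strategies `B' m` (garblings of `Batt m` satisfying the NIAS
equality `J(B' m, r m) = J(Batt m, r m)`) satisfy, for any two environments
`l, m`: `J(B' m, r m) − c_m ≥ J(B' l, r m) − c_l` where `c_m = Z(Batt m)`. -/
theorem niac_necessity
    {M X Y U : Type*} [Fintype X] [Fintype Y] [Fintype U] [Nonempty U]
    (π0 : X → ℝ) (hnonneg : ∀ x, 0 ≤ π0 x) (hsum : ∑ x, π0 x = 1)
    (r : M → X → U → ℝ)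
    (Z : (X → Y → ℝ) → ℝ)
    (Batt : M → X → Y → ℝ) (hBatt : ∀ m, IsStochastic (Batt m))
    (B' : M → X → U → ℝ)
    -- the revealed strategy is a garbling of the chosen attention strategy
    (hgarb : ∀ m, ∃ Q : Y → U → ℝ, (∀ y u, 0 ≤ Q y u) ∧ (∀ y, ∑ u, Q y u = 1) ∧
      ∀ x u, B' m x u = ∑ y, Q y u * Batt m x y)
    -- optimality of the chosen attention strategy in each environment
    (hopt : ∀ m (B : X → Y → ℝ), IsStochastic B →
      maxExpUtility π0 (r m) B - Z B ≤
        maxExpUtility π0 (r m) (Batt m) - Z (Batt m))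
    -- NIAS: revealed and chosen strategies yield the same expected utility
    (hnias : ∀ m, maxExpUtility π0 (r m) (B' m) = maxExpUtility π0 (r m) (Batt m)) :
    ∀ l m : M,
      maxExpUtility π0 (r m) (B' l) - Z (Batt l) ≤
        maxExpUtility π0 (r m) (B' m) - Z (Batt m) := by
  intro l m
  obtain ⟨Q, hQ0, hQ1, hB'⟩ := hgarb l
  have h1 : maxExpUtility π0 (r m) (B' l) ≤ maxExpUtility π0 (r m) (Batt l) :=
    garbling_le π0 (r m) (Batt l) (B' l) Q hQ0 hQ1 hB'
  have h2 := hopt m (Batt l) (hBatt l)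
  have h3 := hnias m
  linarith
end

section
/- Sufficiency construction for NIAC: given utilities {r_m} and scalars {c_m} satisfying the NIAC inequalities, define the information cost Z(B) = max_{m} ( c_m + J(B, r_m) − J(B'_m, r_m) ). Then Z is convex (as a pointwise maximum of convex functions), Z(B'_m) = c_m for each m, and each revealed strategy B'_m maximizes J(B, r_m) − Z(B) over all attention strategies B. -/
open Finset

/-! `Z` is a finite maximum of the convex functions `B ↦ c_m + J(B, r_m) − J(B'_m, r_m)`.
At `B = B'_m` the `m`-th term is `c_m` and NIAC bounds every other term by it, so `Z(B'_m) = c_m`;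
for any `B`, `Z(B)` dominates its `m`-th term, which is the optimality of `B'_m`. -/

section ConvexOnFinset

variable {𝕜 E β ι : Type*} [Semiring 𝕜] [PartialOrder 𝕜] [AddCommMonoid E] [SMul 𝕜 E]
  [AddCommMonoid β] [LinearOrder β] [IsOrderedAddMonoid β] [Module 𝕜 β] {s : Set E}

theorem ConvexOn.finset_sum (hs : Convex 𝕜 s) {t : Finset ι} {f : ι → E → β}
    (hf : ∀ i ∈ t, ConvexOn 𝕜 s (f i)) : ConvexOn 𝕜 s (∑ i ∈ t, f i) := by
  induction t using Finset.cons_induction with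
  | empty => exact convexOn_const 0 hs
  | cons i t hit ih =>
    rw [Finset.sum_cons]
    exact (hf i (mem_cons_self i t)).add (ih fun j hj => hf j (mem_cons_of_mem hj))

theorem ConvexOn.finset_sup' [PosSMulStrictMono 𝕜 β] {t : Finset ι} (ht : t.Nonempty)
    {f : ι → E → β} (hf : ∀ i ∈ t, ConvexOn 𝕜 s (f i)) : ConvexOn 𝕜 s (t.sup' ht f) := by
  induction ht using Finset.Nonempty.cons_induction with
  | singleton i => simpa using hf i (mem_singleton_self i)
  | cons i t hit ht ih =>
    rw [Finset.sup'_cons ht]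
    exact (hf i (mem_cons_self i t)).sup (ih fun j hj => hf j (mem_cons_of_mem hj))

end ConvexOnFinset

theorem convexOn_maxExpUtility {X Y U : Type*} [Fintype X] [Fintype Y] [Fintype U] [Nonempty U]
    (π0 : X → ℝ) (r : X → U → ℝ) :
    ConvexOn ℝ Set.univ (maxExpUtility (Y := Y) π0 r) := by
  have hlin : ∀ y u, ConvexOn ℝ Set.univ fun B : X → Y → ℝ => ∑ x, r x u * B x y * π0 x :=
    fun y u => ⟨convex_univ, fun B₁ _ B₂ _ a b _ _ _ => le_of_eq <| by
      simp only [Pi.add_apply, Pi.smul_apply, smul_eq_mul, mul_sum, ← sum_add_distrib]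
      exact sum_congr rfl fun x _ => by ring⟩
  refine (ConvexOn.finset_sum convex_univ fun y (_ : y ∈ univ) =>
    ConvexOn.finset_sup' univ_nonempty fun u (_ : u ∈ univ) => hlin y u).congr fun B _ => ?_
  simp only [maxExpUtility, Finset.sum_apply, Finset.sup'_apply]

section RevealedCost

variable {M E : Type*} [Fintype M] [Nonempty M] (J : M → E → ℝ) (c : M → ℝ) (b : M → E)

noncomputable def revealedCost (x : E) : ℝ :=
  univ.sup' univ_nonempty fun m => c m + J m x - J m (b m)

variable {J c b}

theorem le_revealedCost (m : M) (x : E) : c m + J m x - J m (b m) ≤ revealedCost J c b x :=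
  le_sup' (fun l => c l + J l x - J l (b l)) (mem_univ m)

theorem revealedCost_apply_eq (hniac : ∀ l m, J m (b l) - c l ≤ J m (b m) - c m) (m : M) :
    revealedCost J c b (b m) = c m := by
  refine le_antisymm (sup'_le _ _ fun l _ => ?_) ?_
  · linarith [hniac m l]
  · simpa using le_revealedCost (J := J) (c := c) (b := b) m (b m)

theorem convexOn_revealedCost {s : Set E} [AddCommMonoid E] [Module ℝ E]
    (hJ : ∀ m, ConvexOn ℝ s (J m)) : ConvexOn ℝ s (revealedCost J c b) := by
  refine (ConvexOn.finset_sup' univ_nonempty fun m (_ : m ∈ univ) =>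
    (hJ m).add_const (c m - J m (b m))).congr fun x _ => ?_
  simp only [revealedCost, Finset.sup'_apply, Pi.add_apply]
  exact sup'_congr _ rfl fun m _ => by ring

theorem sub_revealedCost_le (hniac : ∀ l m, J m (b l) - c l ≤ J m (b m) - c m) (m : M) (x : E) :
    J m x - revealedCost J c b x ≤ J m (b m) - revealedCost J c b (b m) := by
  rw [revealedCost_apply_eq hniac]
  linarith [le_revealedCost (J := J) (c := c) (b := b) m x]

end RevealedCost

theorem niac_sufficiency_construction_general
    {M X U : Type*} [Fintype M] [Nonempty M] [Fintype X] [Fintype U] [Nonempty U]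
    (π0 : X → ℝ)
    (r : M → X → U → ℝ) (c : M → ℝ)
    (B' : M → X → U → ℝ)
    (hniac : ∀ l m : M,
      maxExpUtility π0 (r m) (B' l) - c l ≤
        maxExpUtility π0 (r m) (B' m) - c m)
    (Z : (X → U → ℝ) → ℝ)
    (hZ : ∀ B, Z B = Finset.univ.sup' Finset.univ_nonempty
      (fun m : M => c m + maxExpUtility π0 (r m) B - maxExpUtility π0 (r m) (B' m))) :
    ConvexOn ℝ Set.univ Z ∧
    (∀ m, Z (B' m) = c m) ∧
    (∀ m, ∀ B : X → U → ℝ, IsStochastic B →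
      maxExpUtility π0 (r m) B - Z B ≤
        maxExpUtility π0 (r m) (B' m) - Z (B' m)) := by
  obtain rfl : Z = revealedCost (fun m => maxExpUtility π0 (r m)) c B' := funext hZ
  exact ⟨convexOn_revealedCost fun m => convexOn_maxExpUtility π0 (r m),
    revealedCost_apply_eq hniac, fun m B _ => sub_revealedCost_le hniac m B⟩

/-- **Sufficiency construction for NIAC.**  Given utilities `r m` and scalars
`c m` satisfying the NIAC inequalities, the information cost
`Z(B) = max_m ( c_m + J(B, r_m) − J(B'_m, r_m) )` is convex, satisfies
`Z(B'_m) = c_m`, and each revealed strategy `B'_m` maximizes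
`J(B, r_m) − Z(B)` over all attention strategies `B`. -/
theorem niac_sufficiency_construction
    {M X U : Type*} [Fintype M] [Nonempty M] [Fintype X] [Fintype U] [Nonempty U]
    (π0 : X → ℝ) (hnonneg : ∀ x, 0 ≤ π0 x) (hsum : ∑ x, π0 x = 1)
    (r : M → X → U → ℝ) (c : M → ℝ)
    (B' : M → X → U → ℝ) (hB' : ∀ m, IsStochastic (B' m))
    (hniac : ∀ l m : M,
      maxExpUtility π0 (r m) (B' l) - c l ≤
        maxExpUtility π0 (r m) (B' m) - c m)
    (Z : (X → U → ℝ) → ℝ)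
    (hZ : ∀ B, Z B = Finset.univ.sup' Finset.univ_nonempty
      (fun m : M => c m + maxExpUtility π0 (r m) B - maxExpUtility π0 (r m) (B' m))) :
    ConvexOn ℝ Set.univ Z ∧
    (∀ m, Z (B' m) = c m) ∧
    (∀ m, ∀ B : X → U → ℝ, IsStochastic B →
      maxExpUtility π0 (r m) B - Z B ≤
        maxExpUtility π0 (r m) (B' m) - Z (B' m)) :=
  niac_sufficiency_construction_general π0 r c B' hniac Z hZ
end
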